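/- arXiv:2201.04606 — 5 statements merged into one kernel-verified Lean document; each statement's English description precedes it below -/
import Mathlib

section
/- Let p be a prime number and let A be a (possibly noncommutative) ring with no zero divisors which is a finitely generated module over its center Z, of rank p² over Z (i.e., the localization K ⊗_Z A at the fraction field K of Z has dimension p² as a K-vector space). Then for every element a ∈ A not belonging to Z, the centralizer B_a = {b ∈ A : ab = ba} of a in A is a commutative ring. -/
/-!
Extending scalars to the fraction field `K` of the center `Z` embeds `A` into the domain
`K ⊗[Z] A`, which, being finite-dimensional over `K`, is a division algebra of dimension `p²`;
an element of `A` that is not central stays non-central there.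

In a division algebra `D` of dimension `p²` over `K`, the centralizer `C` of a non-central `a`
is a division subalgebra different from `K` and from `D`, so by the tower law
`[C : K] ∣ [D : K] = p²` it has dimension `p`. As `p` is prime, the only subalgebras of `C` are
`K` and `C`; the center of `C` contains `a ∉ K`, hence is all of `C`.
-/

open Module TensorProduct

namespace Algebra.TensorProduct

variable {R K A : Type*} [CommRing R] [CommRing K] [Algebra R K] [IsFractionRing R K]
  [Ring A] [Algebra R A]

theorem exists_smul_eq_includeRight (x : K ⊗[R] A) :
    ∃ s ∈ nonZeroDivisors R, ∃ u : A, s • x = includeRight u := by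
  obtain ⟨⟨u, s⟩, hu⟩ := IsLocalizedModule.surj (nonZeroDivisors R) (TensorProduct.mk R K A 1) x
  exact ⟨s, s.2, u, hu⟩

variable [Module.IsTorsionFree R A]

theorem includeRight_injective_of_isTorsionFree :
    Function.Injective (includeRight : A →ₐ[R] K ⊗[R] A) :=
  (IsLocalizedModule.injective_iff_isRegular (nonZeroDivisors R) (TensorProduct.mk R K A 1)).2
    fun s ↦ (isRegular_iff_mem_nonZeroDivisors.2 s.2).isSMulRegular

theorem isDomain_of_isFractionRing [IsDomain A] : IsDomain (K ⊗[R] A) := by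
  have hinj := includeRight_injective_of_isTorsionFree (R := R) (K := K) (A := A)
  have : Nontrivial (K ⊗[R] A) := hinj.nontrivial
  have eq_zero_of_smul {x : K ⊗[R] A} {s : R} (hs : s ∈ nonZeroDivisors R) (hx : s • x = 0) :
      x = 0 := by
    rw [← algebraMap_smul K] at hx
    exact (IsLocalization.map_units K ⟨s, hs⟩).smul_eq_zero.1 hx
  suffices NoZeroDivisors (K ⊗[R] A) from NoZeroDivisors.to_isDomain _
  refine ⟨fun {x y} hxy ↦ ?_⟩
  obtain ⟨s, hs, u, hu⟩ := exists_smul_eq_includeRight x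
  obtain ⟨t, ht, v, hv⟩ := exists_smul_eq_includeRight y
  have huv : includeRight (u * v) = (s * t) • (x * y) := by
    rw [map_mul, ← hu, ← hv, smul_mul_smul_comm]
  rw [hxy, smul_zero, ← map_zero includeRight] at huv
  rcases mul_eq_zero.1 (hinj huv) with rfl | rfl
  · exact .inl (eq_zero_of_smul hs (by rw [hu, map_zero]))
  · exact .inr (eq_zero_of_smul ht (by rw [hv, map_zero]))

end Algebra.TensorProduct

namespace Subalgebra

variable {K D : Type*} [Field K] [Ring D] [IsDomain D] [Algebra K D]

theorem finrank_centralizer_singleton_eq {p : ℕ} (hp : p.Prime)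
    (hD : finrank K D = p ^ 2) {a : D} (ha : a ∉ center K D) :
    finrank K (centralizer K {a}) = p := by
  have : FiniteDimensional K D := .of_finrank_pos (hD ▸ pow_pos hp.pos 2)
  let := divisionRingOfFiniteDimensional K (centralizer K {a})
  have hdvd : finrank K (centralizer K {a}) ∣ p ^ 2 :=
    ⟨finrank (centralizer K {a}) D, by rw [finrank_mul_finrank, hD]⟩
  have haC : a ∈ centralizer K {a} := (mem_centralizer_iff K).2 fun _ h ↦ h ▸ rfl
  obtain ⟨i, hi, hC⟩ := (Nat.dvd_prime_pow hp).1 hdvd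
  interval_cases i
  · rw [eq_bot_of_finrank_one hC] at haC
    exact absurd (bot_le (a := center K D) haC) ha
  · simpa using hC
  · have : centralizer K {a} = ⊤ :=
      toSubmodule_injective (Submodule.eq_top_of_finrank_eq (hC.trans hD.symm))
    exact absurd ((centralizer_eq_top_iff_subset K).1 this rfl) ha

theorem mul_comm_of_mem_centralizer_singleton {p : ℕ} (hp : p.Prime)
    (hD : finrank K D = p ^ 2) {a : D} (ha : a ∉ center K D)
    {x y : D} (hx : x ∈ Set.centralizer {a}) (hy : y ∈ Set.centralizer {a}) : x * y = y * x := by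
  set C := centralizer K {a}
  have haC : a ∈ C := (mem_centralizer_iff K).2 fun _ h ↦ h ▸ rfl
  have ha_center : ⟨a, haC⟩ ∈ center K C := mem_center_iff.2 fun z ↦
    Subtype.ext ((mem_centralizer_iff K).1 z.2 a rfl).symm
  have ha_not_bot : ⟨a, haC⟩ ∉ (⊥ : Subalgebra K C) := fun h ↦ by
    obtain ⟨k, hk⟩ := Algebra.mem_bot.1 h
    exact ha (bot_le (a := center K D) (Algebra.mem_bot.2 ⟨k, congrArg Subtype.val hk⟩))
  have hC_prime : (finrank K C).Prime := finrank_centralizer_singleton_eq hp hD ha ▸ hp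
  have hcenter : center K C = ⊤ :=
    ((isSimpleOrder_of_finrank_prime K C hC_prime).eq_bot_or_eq_top _).resolve_left
      fun h ↦ ha_not_bot (h ▸ ha_center)
  have hxy := mem_center_iff.1 (hcenter ▸ Algebra.mem_top : (⟨x, hx⟩ : C) ∈ center K C) ⟨y, hy⟩
  exact (congrArg Subtype.val hxy).symm

end Subalgebra

set_option synthInstance.maxHeartbeats 1000000 in
theorem centralizer_commutative_of_rank_p_sq_general
    (p : ℕ) (hp : p.Prime) (A : Type*) [Ring A] [IsDomain A]
    (hrank : Module.finrank (FractionRing (Subring.center A))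
      (TensorProduct (Subring.center A) (FractionRing (Subring.center A)) A) = p ^ 2)
    (a : A) (ha : a ∉ Subring.center A) :
    ∀ b ∈ Subring.centralizer ({a} : Set A), ∀ c ∈ Subring.centralizer ({a} : Set A),
      b * c = c * b := by
  intro b hb c hc
  let K := FractionRing (Subring.center A)
  have := Algebra.TensorProduct.isDomain_of_isFractionRing (R := Subring.center A) (K := K) (A := A)
  let f : A →ₐ[Subring.center A] K ⊗[Subring.center A] A := Algebra.TensorProduct.includeRight
  have hf : Function.Injective f := Algebra.TensorProduct.includeRight_injective_of_isTorsionFree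
  have hfa : f a ∉ Subalgebra.center K (K ⊗[Subring.center A] A) := fun h ↦
    ha <| Subring.mem_center_iff.2 fun g ↦ hf <| by
      rw [map_mul, map_mul, Subalgebra.mem_center_iff.1 h]
  have hf_centralizer {x : A} (hx : x ∈ Subring.centralizer {a}) :
      f x ∈ Set.centralizer {f a} := by
    rintro _ rfl
    rw [← map_mul, ← map_mul, Subring.mem_centralizer_iff.1 hx a rfl]
  exact hf <| by
    rw [map_mul, map_mul, Subalgebra.mul_comm_of_mem_centralizer_singleton hp hrank hfa
      (hf_centralizer hb) (hf_centralizer hc)]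

set_option synthInstance.maxHeartbeats 1000000 in
/-- Let `p` be a prime and `A` a domain which is a finitely generated module over its
center `Z`, of rank `p ^ 2` over `Z` (i.e. `K ⊗[Z] A` has dimension `p ^ 2` over the
fraction field `K` of `Z`).  Then the centralizer of every element `a ∉ Z` is commutative. -/
theorem centralizer_commutative_of_rank_p_sq
    (p : ℕ) (hp : p.Prime) (A : Type*) [Ring A] [IsDomain A]
    [Module.Finite (Subring.center A) A]
    (hrank : Module.finrank (FractionRing (Subring.center A))
      (TensorProduct (Subring.center A) (FractionRing (Subring.center A)) A) = p ^ 2)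
    (a : A) (ha : a ∉ Subring.center A) :
    ∀ b ∈ Subring.centralizer ({a} : Set A), ∀ c ∈ Subring.centralizer ({a} : Set A),
      b * c = c * b :=
  centralizer_commutative_of_rank_p_sq_general p hp A hrank a ha
end

section
/- Let p be a prime and let D be a division ring whose center K satisfies dim_K D = p². Then for every element a ∈ D not belonging to K: (1) the division subring K(a) of D generated by K and a is a (commutative) field of dimension p over K; and (2) the centralizer of a in D equals K(a); in particular the centralizer of a in D is commutative. -/
open Module

private lemma exists_smul_one_eq {R M : Type*} [DivisionRing R] [Ring M] [Nontrivial M]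
    [Module R M] (h : Module.finrank R M = 1) (x : M) : ∃ c : R, c • (1 : M) = x := by
  haveI : FiniteDimensional R M := FiniteDimensional.of_finrank_pos (by rw [h]; exact one_pos)
  have h1 : Submodule.span R ({1} : Set M) = ⊤ :=
    Submodule.eq_top_of_finrank_eq (by rw [finrank_span_singleton (one_ne_zero), h])
  have hx : x ∈ Submodule.span R ({1} : Set M) := by rw [h1]; trivial
  exact Submodule.mem_span_singleton.mp hx

/-- The centralizer of a set in a division ring, as a subfield. -/
private def centralizerSubfield (D : Type*) [DivisionRing D] (s : Set D) : Subfield D :=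
  (Subring.centralizer s).toSubfield (fun x hx => by
    rw [Subring.mem_centralizer_iff] at hx ⊢
    intro g hg
    exact (Commute.inv_right₀ (hx g hg)).eq)

set_option maxHeartbeats 1000000 in
set_option synthInstance.maxHeartbeats 100000 in
/-- Let `D` be a division ring of dimension `p ^ 2` (with `p` prime) over its center `K`.
Then for every `a ∈ D` not in `K`: the division subring `K(a)` generated by `K` and `a`
is commutative, it has dimension `p` over `K` (as a `K`-subspace of `D`), and it equals
the centralizer of `a` in `D`; in particular the centralizer of `a` is commutative. -/
theorem centralizer_eq_adjoin_of_dim_p_sq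
    (p : ℕ) (hp : p.Prime) (D : Type*) [DivisionRing D]
    (hdim : Module.finrank (Subring.center D) D = p ^ 2)
    (a : D) (ha : a ∉ Subring.center D) :
    (∀ u ∈ Subfield.closure ((Subring.center D : Set D) ∪ {a}),
      ∀ v ∈ Subfield.closure ((Subring.center D : Set D) ∪ {a}), u * v = v * u) ∧
    Module.finrank (Subring.center D)
      (Submodule.span (Subring.center D)
        ((Subfield.closure ((Subring.center D : Set D) ∪ {a}) : Set D))) = p ∧
    Subring.centralizer ({a} : Set D) =
      (Subfield.closure ((Subring.center D : Set D) ∪ {a})).toSubring := by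
  classical
  set K := Subring.center D with hKdef
  set Ca : Subfield D := centralizerSubfield D {a} with hCadef
  set F : Subfield D := Subfield.closure ((K : Set D) ∪ {a}) with hFdef
  have haCa : a ∈ Ca := by
    show a ∈ Subring.centralizer ({a} : Set D)
    rw [Subring.mem_centralizer_iff]
    intro g hg
    rw [Set.mem_singleton_iff] at hg
    subst hg; rfl
  have haF : a ∈ F := Subfield.subset_closure (Or.inr rfl)
  have hFCa : F ≤ Ca := by
    apply Subfield.closure_le.mpr
    rintro x (hx | hx)
    · exact Subring.center_le_centralizer {a} hx
    · rw [Set.mem_singleton_iff] at hx; subst hx; exact haCa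
  -- everything in F commutes with everything in Ca
  have hFcen : ∀ f ∈ F, ∀ x ∈ Ca, f * x = x * f := by
    have hle : F ≤ centralizerSubfield D ((Ca : Set D)) := by
      apply Subfield.closure_le.mpr
      rintro x (hx | hx)
      · exact Subring.center_le_centralizer _ hx
      · rw [Set.mem_singleton_iff] at hx; subst hx
        show x ∈ Subring.centralizer ((Ca : Set D))
        rw [Subring.mem_centralizer_iff]
        intro g hg
        exact ((Subring.mem_centralizer_iff.mp hg) x rfl).symm
    intro f hf x hx
    exact ((Subring.mem_centralizer_iff.mp (hle hf)) x hx).symm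
  have hcomm : ∀ u ∈ F, ∀ v ∈ F, u * v = v * u := fun u hu v hv => hFcen u hu v (hFCa hv)
  -- algebra structures
  letI : Algebra K Ca := RingHom.toAlgebra'
    { toFun := fun k => (⟨k.1, Subring.center_le_centralizer {a} k.2⟩ : Ca)
      map_one' := rfl, map_mul' := fun _ _ => rfl
      map_zero' := rfl, map_add' := fun _ _ => rfl }
    (fun c x => Subtype.ext ((Subring.mem_center_iff.mp c.2 x.1).symm))
  letI : Algebra K F := RingHom.toAlgebra'
    { toFun := fun k => (⟨k.1, Subfield.subset_closure (Or.inl k.2)⟩ : F)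
      map_one' := rfl, map_mul' := fun _ _ => rfl
      map_zero' := rfl, map_add' := fun _ _ => rfl }
    (fun c x => Subtype.ext ((Subring.mem_center_iff.mp c.2 x.1).symm))
  letI : Field F :=
    { (inferInstance : DivisionRing F) with
      mul_comm := fun u v => Subtype.ext (hcomm u.1 u.2 v.1 v.2) }
  letI : Algebra F Ca := RingHom.toAlgebra' (Subfield.inclusion hFCa)
    (fun c x => Subtype.ext (hFcen c.1 c.2 x.1 x.2))
  letI : IsScalarTower K Ca D := ⟨fun x y z => mul_assoc x.1 y.1 z⟩
  letI : IsScalarTower K F Ca := ⟨fun x y z => Subtype.ext (mul_assoc x.1 y.1 z.1)⟩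
  haveI : Module.Free K Ca := Module.Free.of_divisionRing K Ca
  haveI : Module.Free Ca D := Module.Free.of_divisionRing Ca D
  haveI : Module.Free K F := Module.Free.of_divisionRing K F
  haveI : Module.Free F Ca := Module.Free.of_divisionRing F Ca
  have t1 : finrank K Ca * finrank Ca D = p ^ 2 := by
    rw [Module.finrank_mul_finrank]; exact hdim
  have t2 : finrank K F * finrank F Ca = finrank K Ca := Module.finrank_mul_finrank K F Ca
  -- finrank K F ≠ 1
  have hFne1 : finrank K F ≠ 1 := by
    intro h1
    obtain ⟨c, hc⟩ := exists_smul_one_eq h1 (⟨a, haF⟩ : F)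
    apply ha
    have hv : (c : D) * 1 = a := congrArg Subtype.val hc
    rw [mul_one] at hv
    rw [← hv]; exact c.2
  -- finrank Ca D ≠ 1
  have hCane1 : finrank Ca D ≠ 1 := by
    intro h1
    apply ha
    rw [Subring.mem_center_iff]
    intro g
    obtain ⟨c, hc⟩ := exists_smul_one_eq h1 g
    have hg : g ∈ Subring.centralizer ({a} : Set D) := by
      have hv : (c : D) * 1 = g := hc
      rw [mul_one] at hv
      rw [← hv]; exact c.2
    exact ((Subring.mem_centralizer_iff.mp hg) a rfl).symm
  -- finrank K Ca = p
  have hm : finrank K Ca = p := by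
    have hdvd : finrank K Ca ∣ p ^ 2 := ⟨_, t1.symm⟩
    obtain ⟨i, hi, hKCa⟩ := (Nat.dvd_prime_pow hp).mp hdvd
    interval_cases i
    · exfalso
      rw [pow_zero] at hKCa
      rw [hKCa] at t2
      exact hFne1 (Nat.dvd_one.mp ⟨_, t2.symm⟩)
    · rw [pow_one] at hKCa; exact hKCa
    · exfalso
      rw [hKCa] at t1
      have hp2 : 0 < p ^ 2 := pow_pos hp.pos 2
      exact hCane1 (Nat.eq_of_mul_eq_mul_left hp2 (by rw [t1, mul_one]))
  -- finrank K F = p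
  have hF : finrank K F = p := by
    have hdvd : finrank K F ∣ p := ⟨_, (t2.trans hm).symm⟩
    rcases (Nat.Prime.eq_one_or_self_of_dvd hp _ hdvd) with h | h
    · exact absurd h hFne1
    · exact h
  -- finrank F Ca = 1
  have hFCa1 : finrank F Ca = 1 := by
    rw [hF, hm] at t2
    exact Nat.eq_of_mul_eq_mul_left hp.pos (by rw [t2, mul_one])
  -- Ca ⊆ F
  have hCaF : ∀ x ∈ Subring.centralizer ({a} : Set D), x ∈ F := by
    intro x hx
    obtain ⟨c, hc⟩ := exists_smul_one_eq hFCa1 (⟨x, hx⟩ : Ca)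
    have hv : (c : D) * 1 = x := congrArg Subtype.val hc
    rw [mul_one] at hv
    rw [← hv]; exact c.2
  refine ⟨hcomm, ?_, ?_⟩
  · -- finrank of the span
    let S : Submodule K D :=
      { carrier := F
        add_mem' := fun h1 h2 => add_mem h1 h2
        zero_mem' := zero_mem _
        smul_mem' := fun c x hx => F.mul_mem (Subfield.subset_closure (Or.inl c.2)) hx }
    have hspan : Submodule.span K ((F : Set D)) = S :=
      le_antisymm (Submodule.span_le.mpr (fun x hx => hx)) Submodule.subset_span
    have e : S ≃ₗ[K] F :=
      { toFun := fun x => ⟨x.1, x.2⟩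
        invFun := fun x => ⟨x.1, x.2⟩
        left_inv := fun _ => rfl
        right_inv := fun _ => rfl
        map_add' := fun _ _ => rfl
        map_smul' := fun _ _ => rfl }
    rw [hspan, e.finrank_eq, hF]
  · ext x
    constructor
    · intro hx; exact hCaF x hx
    · intro hx; exact hFCa hx
end

section
/- Let k be a field of characteristic zero and let P be a nonconstant polynomial differential operator in one variable over k, i.e., a k-linear endomorphism of k[x] of the form P = a_n d^n/dx^n + ... + a_1 d/dx + a_0 with a_i ∈ k[x], which is not a scalar (not an element of k acting by multiplication). Then the centralizer of P in the ring of all polynomial differential operators in one variable over k is a commutative ring. -/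
/-!
Write an operator in normal form `∑ aᵢ ∂ⁱ`; its order is the largest `i` with `aᵢ ≠ 0`. If `A` and
`B` have orders at most `n + 1` and `m`, the coefficient of `∂ⁿ⁺ᵐ` in `[A, B]` is
`(n + 1) aₙ₊₁ b'ₘ - m a'ₙ₊₁ bₘ`. Hence, if `P` has order `n + 1 ≥ 1` and leading coefficient `a`,
every `U` of order at most `N` commuting with `P` satisfies `(n + 1) a U'_N = N a' U_N`; two such
elements of the same order have a vanishing Wronskian of leading coefficients, so these are
proportional.

One shows by induction on `e` that `[u, v]` has order at most `ord u + ord v - e` for all `u, v`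
commuting with `P`. With `s = ord u` and `t = ord v`, the powers `uᵗ` and `vˢ` both have order `st`,
so `uᵗ - μ vˢ` has lower order for a suitable `μ ∈ k` and `[uᵗ, vˢ] = [uᵗ - μ vˢ, vˢ]` drops by
`e + 1`. By the Leibniz rule for commutators, the coefficient of `[uᵗ, vˢ]` in the critical degree is
`ts bᵗ⁻¹ cˢ⁻¹` times the corresponding coefficient of `[u, v]`, which therefore vanishes as well.
If `P` has order `0` it is multiplication by a nonconstant polynomial, and the computation above
shows that everything commuting with it has order `0`.
-/

open Polynomial

namespace Polynomial

theorem natDegree_sub_monomial_le {R : Type*} [Ring R] {c : R[X]} {n : ℕ}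
    (hc : c.natDegree ≤ n + 1) : (c - monomial (n + 1) (c.coeff (n + 1))).natDegree ≤ n :=
  natDegree_le_pred ((natDegree_sub_le _ _).trans (max_le hc (natDegree_monomial_le _))) (by simp)

theorem exists_eq_C_mul_of_wronskian_eq_zero {K : Type*} [Field K] [CharZero K] {b c : K[X]}
    (h : wronskian b c = 0) (hc : c ≠ 0) : ∃ μ : K, b = C μ * c := by
  classical
  obtain ⟨b', c', hb, hc', hu⟩ := extract_gcd b c
  generalize gcd b c = g at hb hc'
  subst hb hc'
  have hw : wronskian b' c' = 0 := by
    have : wronskian (g * b') (g * c') = g ^ 2 * wronskian b' c' := by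
      simp only [wronskian, derivative_mul]; ring
    rw [this] at h
    exact (mul_eq_zero.mp h).resolve_left (pow_ne_zero 2 (left_ne_zero_of_mul hc))
  obtain ⟨hb', hc'⟩ := ((gcd_isUnit_iff b' c').mp hu).wronskian_eq_zero_iff.mp hw
  obtain ⟨β, rfl⟩ : ∃ β, b' = C β := ⟨_, eq_C_of_derivative_eq_zero hb'⟩
  obtain ⟨γ, rfl⟩ : ∃ γ, c' = C γ := ⟨_, eq_C_of_derivative_eq_zero hc'⟩
  have hγ : γ ≠ 0 := fun h0 => hc (by rw [h0, C_0, mul_zero])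
  refine ⟨β * γ⁻¹, ?_⟩
  rw [mul_left_comm, ← C_mul, mul_assoc, inv_mul_cancel₀ hγ, mul_one]

end Polynomial

namespace PolyDiffOp

variable {k : Type*} [Field k]

/-- The operator `∑ aᵢ ∂ⁱ` encoded by `c = ∑ aᵢ Yⁱ ∈ k[X][Y]`. -/
noncomputable def toEnd : k[X][X] →ₗ[k] Module.End k k[X] :=
  lsum fun i => LinearMap.mulRight k (derivative ^ i : Module.End k k[X]) ∘ₗ LinearMap.mul k k[X]

theorem toEnd_monomial (i : ℕ) (a : k[X]) :
    toEnd (monomial i a) = LinearMap.mulLeft k a * derivative ^ i := by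
  simp only [toEnd, lsum_apply, LinearMap.coe_comp, Function.comp_apply,
    LinearMap.mulRight_apply, map_zero, zero_mul, sum_monomial_index]
  rfl

theorem toEnd_C (a : k[X]) : toEnd (C a) = LinearMap.mulLeft k a := by
  rw [← monomial_zero_left, toEnd_monomial, pow_zero, mul_one]

theorem toEnd_apply (c : k[X][X]) (f : k[X]) :
    toEnd c f = c.sum fun i a => a * derivative^[i] f := by
  simp [toEnd, Polynomial.sum, Module.End.pow_apply]

theorem mulLeft_C (r : k) : LinearMap.mulLeft k (C r) = algebraMap k (Module.End k k[X]) r :=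
  LinearMap.ext fun _ => (smul_eq_C_mul r).symm

theorem derivative_mul_mulLeft (a : k[X]) :
    derivative * LinearMap.mulLeft k a =
      LinearMap.mulLeft k (derivative a) + LinearMap.mulLeft k a * derivative :=
  LinearMap.ext fun f => by simp [derivative_mul]

/-- Left multiplication by `∂` on normal forms: `∂ ∘ a ∂ⁱ = a ∂ⁱ⁺¹ + a' ∂ⁱ`. -/
noncomputable def derivMul : Module.End k k[X][X] :=
  lsum fun i => (monomial (i + 1)).restrictScalars k + (monomial i).restrictScalars k ∘ₗ derivative

theorem derivMul_monomial (i : ℕ) (a : k[X]) :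
    derivMul (monomial i a) = monomial (i + 1) a + monomial i (derivative a) := by
  simp [derivMul, sum_monomial_index]

theorem coeff_derivMul_succ (e : k[X][X]) (t : ℕ) :
    (derivMul e).coeff (t + 1) = e.coeff t + derivative (e.coeff (t + 1)) := by
  induction e using Polynomial.induction_on' with
  | add p q hp hq => simp only [map_add, coeff_add, hp, hq]; ring
  | monomial i a =>
    simp only [derivMul_monomial, coeff_add, coeff_monomial, add_left_inj]
    split_ifs <;> simp_all

theorem coeff_derivMul_zero (e : k[X][X]) : (derivMul e).coeff 0 = derivative (e.coeff 0) := by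
  induction e using Polynomial.induction_on' with
  | add p q hp hq => simp only [map_add, coeff_add, hp, hq]
  | monomial i a =>
    simp only [derivMul_monomial, coeff_add, coeff_monomial]
    split_ifs <;> simp_all

theorem toEnd_derivMul (c : k[X][X]) : toEnd (derivMul c) = derivative * toEnd c := by
  induction c using Polynomial.induction_on' with
  | add p q hp hq => rw [map_add, map_add, hp, hq, map_add, mul_add]
  | monomial i a =>
    rw [derivMul_monomial, map_add, toEnd_monomial, toEnd_monomial, toEnd_monomial, ← mul_assoc,
      derivative_mul_mulLeft, add_mul, mul_assoc, ← pow_succ', add_comm]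

theorem toEnd_derivMul_pow (i : ℕ) (d : k[X][X]) :
    toEnd ((derivMul ^ i) d) = derivative ^ i * toEnd d := by
  induction i with
  | zero => simp
  | succ i ih => rw [pow_succ', Module.End.mul_apply, toEnd_derivMul, ih, pow_succ', mul_assoc]

theorem toEnd_C_mul (a : k[X]) (c : k[X][X]) :
    toEnd (C a * c) = LinearMap.mulLeft k a * toEnd c := by
  induction c using Polynomial.induction_on' with
  | add p q hp hq => rw [mul_add, map_add, hp, hq, map_add, mul_add]
  | monomial i b =>
    rw [C_mul_monomial, toEnd_monomial, toEnd_monomial, ← mul_assoc, LinearMap.mulLeft_mul]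
    rfl

noncomputable def comp (c d : k[X][X]) : k[X][X] :=
  c.sum fun i a => C a * (derivMul ^ i) d

theorem toEnd_comp (c d : k[X][X]) : toEnd (comp c d) = toEnd c * toEnd d := by
  conv_rhs => rw [← c.sum_monomial_eq]
  simp only [comp, Polynomial.sum, map_sum, Finset.sum_mul, toEnd_C_mul, toEnd_derivMul_pow,
    toEnd_monomial, mul_assoc]

theorem comp_monomial (i : ℕ) (a : k[X]) (d : k[X][X]) :
    comp (monomial i a) d = C a * (derivMul ^ i) d := by
  simp [comp, sum_monomial_index]

theorem comp_C (a : k[X]) (d : k[X][X]) : comp (C a) d = C a * d := by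
  rw [← monomial_zero_left, comp_monomial, pow_zero]
  rfl

theorem coeff_comp (c d : k[X][X]) (j : ℕ) :
    (comp c d).coeff j = c.sum fun i a => a * ((derivMul ^ i) d).coeff j := by
  simp only [comp, Polynomial.sum, finsetSum_coeff, coeff_C_mul]

theorem natDegree_derivMul_le (e : k[X][X]) : (derivMul e).natDegree ≤ e.natDegree + 1 := by
  refine natDegree_le_iff_coeff_eq_zero.mpr fun t ht => ?_
  obtain ⟨t, rfl⟩ : ∃ t', t = t' + 1 := ⟨t - 1, by omega⟩
  rw [coeff_derivMul_succ, coeff_eq_zero_of_natDegree_lt (by omega),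
    coeff_eq_zero_of_natDegree_lt (by omega), derivative_zero, add_zero]

theorem natDegree_derivMul_pow_le {e : k[X][X]} {m : ℕ} (he : e.natDegree ≤ m) (i : ℕ) :
    ((derivMul ^ i) e).natDegree ≤ m + i := by
  induction i with
  | zero => simpa using he
  | succ i ih =>
    rw [pow_succ', Module.End.mul_apply]
    exact (natDegree_derivMul_le _).trans (by omega)

theorem coeff_derivMul_pow_add {e : k[X][X]} {m : ℕ} (he : e.natDegree ≤ m) (i : ℕ) :
    ((derivMul ^ i) e).coeff (m + i) = e.coeff m := by
  induction i with
  | zero => rfl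
  | succ i ih =>
    rw [pow_succ', Module.End.mul_apply, ← add_assoc, coeff_derivMul_succ, ih,
      coeff_eq_zero_of_natDegree_lt ((natDegree_derivMul_pow_le he i).trans_lt (by omega)),
      derivative_zero, add_zero]

theorem coeff_derivMul_pow_monomial {i j l : ℕ} (hl : l + 1 = i + j) (b : k[X]) :
    ((derivMul ^ i) (monomial j b)).coeff l = i • derivative b := by
  induction i generalizing l with
  | zero => simp [coeff_monomial]; omega
  | succ i ih =>
    rw [pow_succ', Module.End.mul_apply]
    cases l with
    | zero =>
      obtain ⟨rfl, rfl⟩ : i = 0 ∧ j = 0 := by omega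
      simp [coeff_derivMul_zero]
    | succ l =>
      rw [coeff_derivMul_succ, ih (by omega), show l + 1 = j + i by omega,
        coeff_derivMul_pow_add (natDegree_monomial_le b), coeff_monomial, if_pos rfl, succ_nsmul]

theorem natDegree_comp_le {c d : k[X][X]} {n m : ℕ} (hc : c.natDegree ≤ n)
    (hd : d.natDegree ≤ m) : (comp c d).natDegree ≤ n + m := by
  refine natDegree_le_iff_coeff_eq_zero.mpr fun j hj => ?_
  rw [coeff_comp, Polynomial.sum]
  refine Finset.sum_eq_zero fun i hi => ?_
  have := (le_natDegree_of_mem_supp i hi).trans hc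
  rw [coeff_eq_zero_of_natDegree_lt ((natDegree_derivMul_pow_le hd i).trans_lt (by omega)),
    mul_zero]

theorem coeff_comp_add {c d : k[X][X]} {n m : ℕ} (hc : c.natDegree ≤ n) (hd : d.natDegree ≤ m) :
    (comp c d).coeff (n + m) = c.coeff n * d.coeff m := by
  rw [coeff_comp, Polynomial.sum, Finset.sum_eq_single n]
  · rw [add_comm, coeff_derivMul_pow_add hd]
  · intro i hi hin
    have := (le_natDegree_of_mem_supp i hi).trans hc
    rw [coeff_eq_zero_of_natDegree_lt ((natDegree_derivMul_pow_le hd i).trans_lt (by omega)),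
      mul_zero]
  · intro hn
    rw [notMem_support_iff.mp hn, zero_mul]

theorem coeff_comp_monomial {i j l : ℕ} (hl : l + 1 = i + j) (a b : k[X]) :
    (comp (monomial i a) (monomial j b)).coeff l = i • (a * derivative b) := by
  rw [comp_monomial, coeff_C_mul, coeff_derivMul_pow_monomial hl, mul_smul_comm]

-- A `Subring`, not a `Subalgebra`: subtraction in a subalgebra of `Module.End` does not unify
-- with the one expected by the ring lemmas (`mul_sub`, `noncomm_ring`).
variable (k) in
noncomputable abbrev weylAlgebra : Subring (Module.End k k[X]) :=
  (Algebra.adjoin k {LinearMap.mulLeft k X, derivative}).toSubring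

theorem mulLeft_mem_weylAlgebra (a : k[X]) : LinearMap.mulLeft k a ∈ weylAlgebra k := by
  have h := aeval_algHom_apply (Algebra.lmul k k[X]) X a
  rw [aeval_X_left_apply] at h
  rw [Subalgebra.mem_toSubring, show LinearMap.mulLeft k a = (Algebra.lmul k k[X]) a from rfl, ← h]
  have hX : {(Algebra.lmul k k[X]) X} ⊆ ({LinearMap.mulLeft k X, derivative} :
      Set (Module.End k k[X])) := Set.singleton_subset_iff.mpr (Set.mem_insert _ _)
  exact Algebra.adjoin_mono hX (aeval_mem_adjoin_singleton k _)

theorem toEnd_mem_weylAlgebra (c : k[X][X]) : toEnd c ∈ weylAlgebra k := by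
  rw [← c.sum_monomial_eq, Polynomial.sum, map_sum]
  refine sum_mem fun i _ => ?_
  rw [toEnd_monomial]
  exact mul_mem (mulLeft_mem_weylAlgebra _) (pow_mem (Algebra.subset_adjoin (by simp)) _)

theorem exists_toEnd_eq {A : Module.End k k[X]} (hA : A ∈ weylAlgebra k) : ∃ c, toEnd c = A := by
  replace hA := Subalgebra.mem_toSubring.mp hA
  induction hA using Algebra.adjoin_induction with
  | mem A hA =>
    rcases hA with rfl | rfl
    · exact ⟨C X, toEnd_C X⟩
    · refine ⟨X, ?_⟩
      rw [← monomial_one_one_eq_X, toEnd_monomial, LinearMap.mulLeft_one, pow_one]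
      rfl
  | algebraMap r => exact ⟨C (C r), by rw [toEnd_C, mulLeft_C]⟩
  | add A B _ _ hA hB =>
    obtain ⟨c, rfl⟩ := hA
    obtain ⟨d, rfl⟩ := hB
    exact ⟨c + d, map_add _ _ _⟩
  | mul A B _ _ hA hB =>
    obtain ⟨c, rfl⟩ := hA
    obtain ⟨d, rfl⟩ := hB
    exact ⟨comp c d, toEnd_comp c d⟩

variable [CharZero k]

theorem toEnd_injective : Function.Injective (toEnd (k := k)) := by
  refine (injective_iff_map_eq_zero _).mpr fun c hc => ?_
  by_contra hc0
  set i := c.natTrailingDegree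
  -- Only the lowest term of `c` survives on `X ^ i`.
  have hX : toEnd c (X ^ i) = c.trailingCoeff * (i.factorial : k[X]) := by
    rw [toEnd_apply, Polynomial.sum, Finset.sum_eq_single i]
    · simp [iterate_derivative_X_pow_eq_smul, trailingCoeff, i, Nat.descFactorial_self,
        Algebra.smul_def, mul_comm]
    · intro j hj hji
      have hij : (X ^ i : k[X]).natDegree < j := by
        rw [natDegree_X_pow]
        exact lt_of_le_of_ne (natTrailingDegree_le_of_mem_supp j hj) (Ne.symm hji)
      rw [iterate_derivative_eq_zero hij, mul_zero]
    · intro hi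
      rw [notMem_support_iff.mp hi, zero_mul]
  rw [hc, LinearMap.zero_apply, eq_comm, mul_eq_zero] at hX
  rcases hX with h | h
  · exact hc0 (trailingCoeff_eq_zero.mp h)
  · exact Nat.factorial_ne_zero i (by exact_mod_cast h)

noncomputable def normalForm : weylAlgebra k ≃+ k[X][X] :=
  (AddEquiv.ofBijective (toEnd.toAddMonoidHom.codRestrict (weylAlgebra k) toEnd_mem_weylAlgebra)
    ⟨fun _ _ h => toEnd_injective (congrArg Subtype.val h), fun A =>
      (exists_toEnd_eq A.2).imp fun _ hc => Subtype.ext hc⟩).symm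

@[simp]
theorem toEnd_normalForm (A : weylAlgebra k) : toEnd (normalForm A) = A :=
  congrArg Subtype.val (normalForm.symm_apply_apply A)

@[simp]
theorem coe_normalForm_symm (c : k[X][X]) : (normalForm.symm c : Module.End k k[X]) = toEnd c :=
  rfl

theorem normalForm_mul (A B : weylAlgebra k) :
    normalForm (A * B) = comp (normalForm A) (normalForm B) := by
  rw [← normalForm.eq_symm_apply]
  ext1
  simp [toEnd_comp]

theorem normalForm_one : normalForm (1 : weylAlgebra k) = 1 := by
  rw [← normalForm.eq_symm_apply]
  ext1
  rw [coe_normalForm_symm, ← C_1, toEnd_C, LinearMap.mulLeft_one]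
  rfl

theorem coe_normalForm_symm_C_C (r : k) :
    (normalForm.symm (C (C r)) : Module.End k k[X]) = algebraMap k _ r := by
  rw [coe_normalForm_symm, toEnd_C, mulLeft_C]

theorem commute_normalForm_symm_C_C (r : k) (A : weylAlgebra k) :
    Commute (normalForm.symm (C (C r))) A :=
  Subtype.ext <| by
    rw [Subring.coe_mul, Subring.coe_mul, coe_normalForm_symm_C_C]
    exact Algebra.commutes r (A : Module.End k k[X])

noncomputable abbrev order (A : weylAlgebra k) : ℕ := (normalForm A).natDegree

theorem coeff_ne_zero_of_order_eq {A : weylAlgebra k} {n : ℕ} (hA : order A = n + 1) :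
    (normalForm A).coeff (n + 1) ≠ 0 := by
  have : normalForm A ≠ 0 := fun h0 => by simp [order, h0] at hA
  rw [← hA]
  exact leadingCoeff_ne_zero.mpr this

theorem order_mul_le {A B : weylAlgebra k} {n m : ℕ} (hA : order A ≤ n) (hB : order B ≤ m) :
    order (A * B) ≤ n + m := by
  rw [order, normalForm_mul]
  exact natDegree_comp_le hA hB

theorem coeff_mul_add {A B : weylAlgebra k} {n m : ℕ} (hA : order A ≤ n) (hB : order B ≤ m) :
    (normalForm (A * B)).coeff (n + m) = (normalForm A).coeff n * (normalForm B).coeff m := by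
  rw [normalForm_mul]
  exact coeff_comp_add hA hB

theorem order_pow_le {A : weylAlgebra k} {n : ℕ} (hA : order A ≤ n) (t : ℕ) :
    order (A ^ t) ≤ t * n := by
  induction t with
  | zero => simp [order, normalForm_one]
  | succ t ih =>
    rw [pow_succ', add_mul, one_mul, add_comm]
    exact order_mul_le hA ih

theorem coeff_pow_mul {A : weylAlgebra k} {n : ℕ} (hA : order A ≤ n) (t : ℕ) :
    (normalForm (A ^ t)).coeff (t * n) = (normalForm A).coeff n ^ t := by
  induction t with
  | zero => simp [normalForm_one]
  | succ t ih =>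
    rw [pow_succ', add_mul, one_mul, add_comm, coeff_mul_add hA (order_pow_le hA t), ih,
      pow_succ']

theorem commute_of_order_eq_zero {A B : weylAlgebra k} (hA : order A = 0) (hB : order B = 0) :
    Commute A B :=
  normalForm.injective <| by
    rw [normalForm_mul, normalForm_mul, eq_C_of_natDegree_eq_zero hA,
      eq_C_of_natDegree_eq_zero hB, comp_C, comp_C, mul_comm]

theorem coeff_commutator_add_eq_zero {A B : weylAlgebra k} {n m : ℕ} (hA : order A ≤ n)
    (hB : order B ≤ m) : (normalForm (A * B - B * A)).coeff (n + m) = 0 := by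
  rw [map_sub, coeff_sub, coeff_mul_add hA hB, add_comm, coeff_mul_add hB hA, mul_comm, sub_self]

theorem coeff_commutator_add {A B : weylAlgebra k} {n m : ℕ} (hA : order A ≤ n + 1)
    (hB : order B ≤ m) :
    (normalForm (A * B - B * A)).coeff (n + m) =
      (n + 1) • ((normalForm A).coeff (n + 1) * derivative ((normalForm B).coeff m)) -
        m • (derivative ((normalForm A).coeff (n + 1)) * (normalForm B).coeff m) := by
  set a := (normalForm A).coeff (n + 1)
  set b := (normalForm B).coeff m
  set A₀ := normalForm.symm (monomial (n + 1) a)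
  set B₀ := normalForm.symm (monomial m b)
  have hA' : order (A - A₀) ≤ n := by
    simpa [order, A₀] using natDegree_sub_monomial_le hA
  have hsplit : A * B - B * A = (A₀ * B₀ - B₀ * A₀) + (A₀ * (B - B₀) - (B - B₀) * A₀) +
      ((A - A₀) * B - B * (A - A₀)) := by noncomm_ring
  have hlow : (normalForm (A₀ * (B - B₀) - (B - B₀) * A₀)).coeff (n + m) = 0 := by
    cases m with
    | zero =>
      have : B - B₀ = 0 := by
        rw [← normalForm.map_eq_zero_iff, map_sub]
        simp [B₀, b, ← eq_C_of_natDegree_eq_zero (Nat.le_zero.mp hB)]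
      simp [this]
    | succ m =>
      have hB' : order (B - B₀) ≤ m := by
        simpa [order, B₀] using natDegree_sub_monomial_le hB
      rw [show n + (m + 1) = n + 1 + m by omega]
      exact coeff_commutator_add_eq_zero (by simpa [order, A₀] using natDegree_monomial_le a) hB'
  rw [hsplit, map_add, map_add, coeff_add, coeff_add, hlow, coeff_commutator_add_eq_zero hA' hB,
    map_sub, coeff_sub, normalForm_mul, normalForm_mul]
  simp only [A₀, B₀, AddEquiv.apply_symm_apply]
  rw [coeff_comp_monomial (by omega), coeff_comp_monomial (by omega), mul_comm b]
  simp

theorem nsmul_mul_derivative_eq_of_commute {A B : weylAlgebra k} (h : Commute A B) {n m : ℕ}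
    (hA : order A ≤ n + 1) (hB : order B ≤ m) :
    (n + 1) • ((normalForm A).coeff (n + 1) * derivative ((normalForm B).coeff m)) =
      m • (derivative ((normalForm A).coeff (n + 1)) * (normalForm B).coeff m) := by
  have := coeff_commutator_add hA hB
  rwa [h.eq, sub_self, map_zero, coeff_zero, eq_comm, sub_eq_zero] at this

theorem commute_of_commute_of_order_eq_zero {P u : weylAlgebra k} (h : Commute P u) {n : ℕ}
    (hP : order P = n + 1) (hu : order u = 0) (v : weylAlgebra k) : Commute u v := by
  have hrel := nsmul_mul_derivative_eq_of_commute h hP.le hu.le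
  rw [zero_smul, smul_eq_zero, mul_eq_zero] at hrel
  have hu0 : derivative ((normalForm u).coeff 0) = 0 := by
    rcases hrel with h0 | h0 | h0
    · exact absurd h0 n.succ_ne_zero
    · exact absurd h0 (coeff_ne_zero_of_order_eq hP)
    · exact h0
  have : u = normalForm.symm (C (C (((normalForm u).coeff 0).coeff 0))) := by
    rw [normalForm.eq_symm_apply, ← eq_C_of_derivative_eq_zero hu0,
      ← eq_C_of_natDegree_eq_zero hu]
  rw [this]
  exact commute_normalForm_symm_C_C _ v

theorem order_eq_zero_of_commute {P u : weylAlgebra k} (h : Commute P u) (hP : order P = 0)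
    (hb : derivative ((normalForm P).coeff 0) ≠ 0) : order u = 0 := by
  by_contra hu
  obtain ⟨n, hn⟩ := Nat.exists_eq_succ_of_ne_zero hu
  have hrel := nsmul_mul_derivative_eq_of_commute h.symm hn.le hP.le
  rw [zero_smul, smul_eq_zero, mul_eq_zero] at hrel
  rcases hrel with h0 | h0 | h0
  · exact n.succ_ne_zero h0
  · exact coeff_ne_zero_of_order_eq hn h0
  · exact hb h0

theorem coeff_commutator_pow {w z : weylAlgebra k} {s J : ℕ} (hw : order w ≤ s)
    (hbound : ∀ i, (normalForm (w ^ (i + 1) * z - z * w ^ (i + 1))).natDegree ≤ i * s + J)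
    (m : ℕ) :
    (normalForm (w ^ (m + 1) * z - z * w ^ (m + 1))).coeff (m * s + J) =
      (m + 1) • ((normalForm w).coeff s ^ m * (normalForm (w * z - z * w)).coeff J) := by
  induction m with
  | zero => simp
  | succ m ih =>
    have hsplit : w ^ (m + 1 + 1) * z - z * w ^ (m + 1 + 1) =
        w * (w ^ (m + 1) * z - z * w ^ (m + 1)) + (w * z - z * w) * w ^ (m + 1) := by
      rw [pow_succ' w (m + 1)]; noncomm_ring
    have hwz : order (w * z - z * w) ≤ J := by
      simpa only [zero_add, pow_one, zero_mul] using hbound 0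
    rw [hsplit, map_add, coeff_add, show (m + 1) * s + J = s + (m * s + J) by ring,
      coeff_mul_add hw (hbound m), show s + (m * s + J) = J + (m + 1) * s by ring,
      coeff_mul_add hwz (order_pow_le hw (m + 1)), ih, coeff_pow_mul hw]
    simp only [nsmul_eq_mul]
    push_cast
    ring

/-- For `u, v` commuting with `P`, `[u, v]` has order at most `order u + order v - e`, and vanishes
if `order u + order v < e`. -/
def CommutatorDrop (P : weylAlgebra k) (e : ℕ) : Prop :=
  ∀ u v : weylAlgebra k, Commute P u → Commute P v → ∀ j, order u + order v < j + e →
    (normalForm (u * v - v * u)).coeff j = 0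

theorem commutatorDrop_zero (P : weylAlgebra k) : CommutatorDrop P 0 := fun u v _ _ j hj => by
  have huv : order (u * v) < j := (order_mul_le le_rfl le_rfl).trans_lt (by omega)
  have hvu : order (v * u) < j := (order_mul_le le_rfl le_rfl).trans_lt (by omega)
  rw [map_sub, coeff_sub, coeff_eq_zero_of_natDegree_lt huv, coeff_eq_zero_of_natDegree_lt hvu,
    sub_zero]

namespace CommutatorDrop

variable {P : weylAlgebra k} {e : ℕ}

theorem natDegree_le (h : CommutatorDrop P e) {u v : weylAlgebra k} (hu : Commute P u)
    (hv : Commute P v) {B : ℕ} (hB : order u + order v ≤ B + e) :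
    (normalForm (u * v - v * u)).natDegree ≤ B :=
  natDegree_le_iff_coeff_eq_zero.mpr fun j hj => h u v hu hv j (by omega)

theorem coeff_commutator_pow_pow (h : CommutatorDrop P e) {u v : weylAlgebra k}
    (hu : Commute P u) (hv : Commute P v) {s t j : ℕ} (hs : order u ≤ s + 1)
    (ht : order v ≤ t + 1) (hj : j + e = s + t + 2) :
    (normalForm (u ^ (t + 1) * v ^ (s + 1) - v ^ (s + 1) * u ^ (t + 1))).coeff
        (t * (s + 1) + (s * (t + 1) + j)) =
      ((t + 1) * (s + 1)) • ((normalForm u).coeff (s + 1) ^ t * (normalForm v).coeff (t + 1) ^ s *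
        (normalForm (u * v - v * u)).coeff j) := by
  have hvu := coeff_commutator_pow ht (J := j) (z := u) (fun i =>
    h.natDegree_le (hv.pow_right _) hu (by have := order_pow_le ht (i + 1); nlinarith)) s
  have huv := coeff_commutator_pow hs (J := s * (t + 1) + j) (z := v ^ (s + 1)) (fun i =>
    h.natDegree_le (hu.pow_right _) (hv.pow_right _)
      (by have := order_pow_le hs (i + 1); have := order_pow_le ht (s + 1); nlinarith)) t
  have hneg : ∀ (A B : weylAlgebra k) (i : ℕ),
      (normalForm (A * B - B * A)).coeff i = -(normalForm (B * A - A * B)).coeff i := by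
    intro A B i
    rw [← coeff_neg, ← map_neg, neg_sub]
  rw [huv, hneg u, hvu, hneg v]
  simp only [nsmul_eq_mul]
  push_cast
  ring

theorem coeff_commutator_eq_zero_of_order_le (h : CommutatorDrop P e) {n : ℕ}
    (hP : order P = n + 1) {U V : weylAlgebra k} (hU : Commute P U) (hV : Commute P V) {N J : ℕ}
    (hUN : order U ≤ N) (hVN : order V ≤ N) (hVc : (normalForm V).coeff N ≠ 0) (hN : N ≠ 0)
    (hJ : 2 * N ≤ J + e) : (normalForm (U * V - V * U)).coeff J = 0 := by
  set x := (normalForm U).coeff N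
  set y := (normalForm V).coeff N
  have hx := nsmul_mul_derivative_eq_of_commute hU hP.le hUN
  have hy := nsmul_mul_derivative_eq_of_commute hV hP.le hVN
  simp only [nsmul_eq_mul] at hx hy
  have hw : wronskian x y = 0 := by
    have ha : ((n + 1 : ℕ) : k[X]) * (normalForm P).coeff (n + 1) ≠ 0 :=
      mul_ne_zero (Nat.cast_ne_zero.mpr n.succ_ne_zero) (coeff_ne_zero_of_order_eq hP)
    refine (mul_eq_zero.mp ?_).resolve_left ha
    rw [wronskian]
    linear_combination x * hy - y * hx
  obtain ⟨μ, hμ⟩ := exists_eq_C_mul_of_wronskian_eq_zero hw hVc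
  set S := normalForm.symm (C (C μ))
  have hS : normalForm (S * V) = C (C μ) * normalForm V := by
    rw [normalForm_mul, AddEquiv.apply_symm_apply, comp_C]
  have hZ : order (U - S * V) ≤ N - 1 := by
    refine natDegree_le_pred ?_ ?_
    · rw [map_sub, hS]
      exact (natDegree_sub_le _ _).trans (max_le hUN (natDegree_C_mul_le _ _ |>.trans hVN))
    · rw [map_sub, hS, coeff_sub, coeff_C_mul, ← hμ, sub_self]
  have hSV : S * V = V * S := (commute_normalForm_symm_C_C μ V).eq
  have hcomm : (U - S * V) * V - V * (U - S * V) = U * V - V * U := by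
    simp only [sub_mul, mul_sub, ← mul_assoc, ← hSV]
    abel
  rw [← hcomm]
  exact h (U - S * V) V (hU.sub_right ((commute_normalForm_symm_C_C μ P).symm.mul_right hV)) hV J
    (by omega)

theorem succ (h : CommutatorDrop P e) {n : ℕ} (hP : order P = n + 1) :
    CommutatorDrop P (e + 1) := by
  intro u v hu hv j hj
  rcases Nat.lt_or_ge (order u + order v) (j + e) with hlt | hge
  · exact h u v hu hv j hlt
  by_cases hs : order u = 0
  · rw [(commute_of_commute_of_order_eq_zero hu hP hs v).eq, sub_self, map_zero, coeff_zero]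
  by_cases ht : order v = 0
  · rw [(commute_of_commute_of_order_eq_zero hv hP ht u).eq, sub_self, map_zero, coeff_zero]
  obtain ⟨s, hs⟩ := Nat.exists_eq_succ_of_ne_zero hs
  obtain ⟨t, ht⟩ := Nat.exists_eq_succ_of_ne_zero ht
  have hchain := h.coeff_commutator_pow_pow (j := j) hu hv hs.le ht.le (by omega)
  have hpow := coeff_pow_mul ht.le (s + 1)
  rw [h.coeff_commutator_eq_zero_of_order_le hP (hu.pow_right _) (hv.pow_right _)
    (order_pow_le hs.le _) (mul_comm (s + 1) (t + 1) ▸ order_pow_le ht.le _)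
    (by rw [mul_comm (t + 1), hpow]; exact pow_ne_zero _ (coeff_ne_zero_of_order_eq ht))
    (Nat.mul_ne_zero (by omega) (by omega)) (by nlinarith)] at hchain
  rcases smul_eq_zero.mp hchain.symm with h0 | h0
  · exact absurd h0 (by positivity)
  · exact (mul_eq_zero.mp h0).resolve_left (mul_ne_zero
      (pow_ne_zero _ (coeff_ne_zero_of_order_eq hs)) (pow_ne_zero _ (coeff_ne_zero_of_order_eq ht)))

end CommutatorDrop

theorem commute_of_commute_of_order_eq_succ {P u v : weylAlgebra k} {n : ℕ}
    (hP : order P = n + 1) (hu : Commute P u) (hv : Commute P v) : Commute u v := by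
  have hdrop : ∀ e, CommutatorDrop P e := fun e => by
    induction e with
    | zero => exact commutatorDrop_zero P
    | succ e ih => exact ih.succ hP
  have : normalForm (u * v - v * u) = 0 :=
    Polynomial.ext fun j => hdrop (order u + order v + 1) u v hu hv j (by omega)
  rwa [AddEquiv.map_eq_zero_iff, sub_eq_zero] at this

theorem commute_of_commute_of_ne_algebraMap {P u v : weylAlgebra k}
    (hP : ∀ r : k, (P : Module.End k k[X]) ≠ algebraMap k _ r) (hu : Commute P u)
    (hv : Commute P v) : Commute u v := by
  by_cases h0 : order P = 0
  · have hb : derivative ((normalForm P).coeff 0) ≠ 0 := fun hb =>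
      hP (((normalForm P).coeff 0).coeff 0) <| by
        rw [← coe_normalForm_symm_C_C, ← eq_C_of_derivative_eq_zero hb,
          ← eq_C_of_natDegree_eq_zero h0, AddEquiv.symm_apply_apply]
    exact commute_of_order_eq_zero (order_eq_zero_of_commute hu h0 hb)
      (order_eq_zero_of_commute hv h0 hb)
  · obtain ⟨n, hn⟩ := Nat.exists_eq_succ_of_ne_zero h0
    exact commute_of_commute_of_order_eq_succ hn hu hv

end PolyDiffOp

/-- Let `k` be a field of characteristic zero and let `W` be the ring of polynomial
differential operators in one variable over `k`, i.e. the `k`-subalgebra of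
`End_k (k[X])` generated by multiplication by `X` and the derivative `d/dX`.  Then the
centralizer of every nonconstant operator `P ∈ W` (one which is not multiplication by a
scalar) is a commutative ring. -/
theorem centralizer_commutative_of_differential_operator
    (k : Type*) [Field k] [CharZero k]
    (P : Module.End k (Polynomial k))
    (hP : P ∈ Algebra.adjoin k
      ({LinearMap.mulLeft k Polynomial.X, Polynomial.derivative} :
        Set (Module.End k (Polynomial k))))
    (hPnc : ∀ c : k, P ≠ algebraMap k (Module.End k (Polynomial k)) c) :
    ∀ Q ∈ Algebra.adjoin k
        ({LinearMap.mulLeft k Polynomial.X, Polynomial.derivative} :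
          Set (Module.End k (Polynomial k))),
      ∀ R ∈ Algebra.adjoin k
        ({LinearMap.mulLeft k Polynomial.X, Polynomial.derivative} :
          Set (Module.End k (Polynomial k))),
      P * Q = Q * P → P * R = R * P → Q * R = R * Q := by
  intro Q hQ R hR hPQ hPR
  exact congrArg Subtype.val <| PolyDiffOp.commute_of_commute_of_ne_algebraMap
    (P := ⟨P, hP⟩) (u := ⟨Q, hQ⟩) (v := ⟨R, hR⟩) hPnc (Subtype.ext hPQ) (Subtype.ext hPR)
end

section
/- Let k be a field of positive characteristic p and let a ∈ A₁(k) be an element of the first Weyl algebra whose total degree n is positive and prime to p (i.e., p does not divide n). Then a does not belong to the center of A₁(k). -/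
/-! Commuting with `d` and with `x` lowers the monomial basis:
`d (x^i d^j) - (x^i d^j) d = i x^(i-1) d^j` and `(x^i d^j) x - x (x^i d^j) = j x^i d^(j-1)`.
Comparing coefficients, a central element can only involve monomials `x^i d^j` with
`i = j = 0` in `k`, i.e. `p ∣ i` and `p ∣ j`; so each of its monomials has total degree
divisible by `p`. -/

theorem mul_pow_succ_sub_pow_succ_mul {R : Type*} [Ring R] {a b c : R}
    (hc : a * b - b * a = c) (hbc : Commute b c) (n : ℕ) :
    a * b ^ (n + 1) - b ^ (n + 1) * a = (n + 1) • (b ^ n * c) := by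
  induction n with
  | zero => simpa using hc
  | succ n ih =>
    calc a * b ^ (n + 2) - b ^ (n + 2) * a
        = (a * b ^ (n + 1) - b ^ (n + 1) * a) * b + b ^ (n + 1) * (a * b - b * a) := by
          rw [pow_succ _ (n + 1)]; noncomm_ring
      _ = (n + 2) • (b ^ (n + 1) * c) := by
          rw [ih, hc, smul_mul_assoc, mul_assoc, ← hbc.eq, ← mul_assoc, ← pow_succ,
            succ_nsmul _ (n + 1)]

theorem Module.Basis.repr_map_apply_of_shift {ι R M : Type*} [CommSemiring R]
    [AddCommMonoid M] [Module R M] (B : Module.Basis ι R M) (L : M →ₗ[R] M) {s : ι → ι}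
    (hs : Function.Injective s) (w : ι → R) (hL : ∀ i, L (B (s i)) = w i • B i)
    (hL0 : ∀ m ∉ Set.range s, L (B m) = 0) (v : M) (i : ι) :
    B.repr (L v) i = w i * B.repr v (s i) := by
  classical
  have key : Finsupp.lapply i ∘ₗ B.repr.toLinearMap ∘ₗ L =
      w i • (Finsupp.lapply (s i) ∘ₗ B.repr.toLinearMap) := B.ext fun m => by
    by_cases hm : m ∈ Set.range s
    · obtain ⟨m, rfl⟩ := hm
      rcases eq_or_ne m i with rfl | hmi
      · simp [hL]
      · simp [hL, hs.eq_iff, hmi.symm]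
    · have : m ≠ s i := fun h => hm ⟨i, h.symm⟩
      simp [hL0 m hm, this]
  simpa using LinearMap.congr_fun key v

section WeylAlgebra

variable {k A : Type*} [CommRing k] [Ring A] [Algebra k A] {x d : A}

theorem weyl_d_mul_sub_mul_d (hxd : d * x - x * d = 1) (i j : ℕ) :
    d * (x ^ (i + 1) * d ^ j) - x ^ (i + 1) * d ^ j * d = (i + 1) • (x ^ i * d ^ j) := by
  have h := mul_pow_succ_sub_pow_succ_mul hxd (Commute.one_right x) i
  calc d * (x ^ (i + 1) * d ^ j) - x ^ (i + 1) * d ^ j * d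
      = (d * x ^ (i + 1) - x ^ (i + 1) * d) * d ^ j := by
        simp only [sub_mul, mul_assoc, ← pow_succ, ← pow_succ']
    _ = (i + 1) • (x ^ i * d ^ j) := by rw [h, mul_one, smul_mul_assoc]

theorem weyl_mul_x_sub_x_mul (hxd : d * x - x * d = 1) (i j : ℕ) :
    x ^ i * d ^ (j + 1) * x - x * (x ^ i * d ^ (j + 1)) = (j + 1) • (x ^ i * d ^ j) := by
  have h := mul_pow_succ_sub_pow_succ_mul (c := -1) (by rw [← hxd, neg_sub])
    (Commute.neg_one_right d) j
  calc x ^ i * d ^ (j + 1) * x - x * (x ^ i * d ^ (j + 1))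
      = -(x ^ i * (x * d ^ (j + 1) - d ^ (j + 1) * x)) := by
        rw [← mul_assoc x, ← pow_succ', pow_succ x i]; noncomm_ring
    _ = (j + 1) • (x ^ i * d ^ j) := by
        rw [h, mul_neg_one, smul_neg, mul_neg, neg_neg, mul_smul_comm]

variable {B : Module.Basis (ℕ × ℕ) k A}

theorem weyl_repr_d_mul_sub_mul_d (hxd : d * x - x * d = 1)
    (hB : ∀ ij : ℕ × ℕ, B ij = x ^ ij.1 * d ^ ij.2) (a : A) (i j : ℕ) :
    B.repr (d * a - a * d) (i, j) = (i + 1 : k) * B.repr a (i + 1, j) := by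
  have h := B.repr_map_apply_of_shift (LinearMap.mulLeft k d - LinearMap.mulRight k d)
    ((add_left_injective 1).prodMap Function.injective_id) (fun ij => (ij.1 + 1 : k)) ?_ ?_
    a (i, j)
  · simpa using h
  · rintro ⟨i, j⟩
    simp [hB, weyl_d_mul_sub_mul_d hxd, Algebra.smul_def]
  · rintro ⟨_ | i, j⟩ h
    · simp [hB, pow_mul_comm']
    · exact absurd ⟨(i, j), rfl⟩ h

theorem weyl_repr_mul_x_sub_x_mul (hxd : d * x - x * d = 1)
    (hB : ∀ ij : ℕ × ℕ, B ij = x ^ ij.1 * d ^ ij.2) (a : A) (i j : ℕ) :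
    B.repr (a * x - x * a) (i, j) = (j + 1 : k) * B.repr a (i, j + 1) := by
  have h := B.repr_map_apply_of_shift (LinearMap.mulRight k x - LinearMap.mulLeft k x)
    (Function.injective_id.prodMap (add_left_injective 1)) (fun ij => (ij.2 + 1 : k)) ?_ ?_
    a (i, j)
  · simpa using h
  · rintro ⟨i, j⟩
    simp [hB, weyl_mul_x_sub_x_mul hxd, Algebra.smul_def]
  · rintro ⟨i, _ | j⟩ h
    · simp [hB, pow_mul_comm']
    · exact absurd ⟨(i, j), rfl⟩ h

theorem weyl_natCast_eq_zero_of_mem_center [NoZeroDivisors k] (hxd : d * x - x * d = 1)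
    (hB : ∀ ij : ℕ × ℕ, B ij = x ^ ij.1 * d ^ ij.2) {a : A} (ha : a ∈ Subring.center A)
    {ij : ℕ × ℕ} (hij : ij ∈ (B.repr a).support) : (ij.1 : k) = 0 ∧ (ij.2 : k) = 0 := by
  obtain ⟨i, j⟩ := ij
  have hcomm : ∀ g, g * a = a * g := Subring.mem_center_iff.mp ha
  have hc : B.repr a (i, j) ≠ 0 := Finsupp.mem_support_iff.mp hij
  constructor
  · cases i with
    | zero => exact Nat.cast_zero
    | succ i =>
      have h := weyl_repr_d_mul_sub_mul_d hxd hB a i j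
      rw [hcomm d, sub_self, map_zero, Finsupp.coe_zero, Pi.zero_apply, eq_comm] at h
      exact_mod_cast (mul_eq_zero.mp h).resolve_right hc
  · cases j with
    | zero => exact Nat.cast_zero
    | succ j =>
      have h := weyl_repr_mul_x_sub_x_mul hxd hB a i j
      rw [hcomm x, sub_self, map_zero, Finsupp.coe_zero, Pi.zero_apply, eq_comm] at h
      exact_mod_cast (mul_eq_zero.mp h).resolve_right hc

end WeylAlgebra

theorem weyl_not_central_of_totalDegree_prime_to_char_general
    (k : Type*) [Field k] (p : ℕ) [CharP k p]
    (A : Type*) [Ring A] [Algebra k A] (x d : A)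
    (hxd : d * x - x * d = 1)
    (B : Module.Basis (ℕ × ℕ) k A) (hB : ∀ ij : ℕ × ℕ, B ij = x ^ ij.1 * d ^ ij.2)
    (a : A) (n : ℕ) (hpn : ¬ p ∣ n)
    (hdeg : ∃ ij ∈ (B.repr a).support, ij.1 + ij.2 = n) :
    a ∉ Subring.center A := by
  intro ha
  obtain ⟨ij, hij, rfl⟩ := hdeg
  obtain ⟨hi, hj⟩ := weyl_natCast_eq_zero_of_mem_center hxd hB ha hij
  rw [CharP.cast_eq_zero_iff k p] at hi hj
  exact hpn (dvd_add hi hj)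

/-- Let `k` be a field of positive characteristic `p` and `A` the first Weyl algebra over
`k` (generators `x`, `d` with `d * x - x * d = 1` and `k`-basis the monomials
`x ^ i * d ^ j`).  If `a ∈ A` has total degree `n` (the maximum of `i + j` over the
monomials `x ^ i * d ^ j` appearing in `a`) with `n` positive and prime to `p`, then `a`
is not central in `A`. -/
theorem weyl_not_central_of_totalDegree_prime_to_char
    (k : Type*) [Field k] (p : ℕ) (hp : p ≠ 0) [CharP k p]
    (A : Type*) [Ring A] [Algebra k A] (x d : A)
    (hxd : d * x - x * d = 1)
    (B : Module.Basis (ℕ × ℕ) k A) (hB : ∀ ij : ℕ × ℕ, B ij = x ^ ij.1 * d ^ ij.2)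
    (a : A) (n : ℕ) (hn : 0 < n) (hpn : ¬ p ∣ n)
    (hdeg : ∃ ij ∈ (B.repr a).support, ij.1 + ij.2 = n)
    (hle : ∀ ij ∈ (B.repr a).support, ij.1 + ij.2 ≤ n) :
    a ∉ Subring.center A :=
  weyl_not_central_of_totalDegree_prime_to_char_general k p A x d hxd B hB a n hpn hdeg
end

section
/- Let k be a field whose characteristic is a prime p. Then the first Weyl algebra A₁(k) is a domain (it has no zero divisors) and it is a free module of rank p² over its center; in particular, the localization of A₁(k) at the nonzero elements of its center Z is a K-vector space of dimension p², where K is the fraction field of Z. -/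
/-!
Writing `B (i, j) = x ^ i * d ^ j`, the product `B u * B v` is `B (u + v)` plus monomials of
smaller `x`-degree, because commuting `d ^ j` past `x ^ a` only produces lower powers of `x`.
Hence, ordering exponents lexicographically, the leading coefficient of a product is the product
of the leading coefficients, and `A` is a domain.

The maps `z ↦ d * z - z * d` and `z ↦ z * x - x * z` lower the exponent of `x`, resp. `d`, by one
and multiply by it; in characteristic `p` a central element therefore only involves monomials
`x ^ i * d ^ j` with `p ∣ i` and `p ∣ j`, while `x ^ p` and `d ^ p` are central. So for central
`z` the product `z * x ^ r * d ^ s` only involves exponents congruent to `(r, s)` mod `p`: in a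
relation `∑ z_rs * x ^ r * d ^ s = 0` with `r, s < p` no two summands can cancel, and each
`z_rs` vanishes as `A` is a domain. The same monomials span, as
`x ^ i * d ^ j = x ^ (p * (i / p)) * d ^ (p * (j / p)) * (x ^ (i % p) * d ^ (j % p))`.
-/

namespace Module.Basis

variable {ι R A : Type*} [CommRing R] [Ring A] [Algebra R A] (B : Basis ι R A)

theorem repr_mul_apply [DecidableEq ι] (a b : A) (w : ι) :
    B.repr (a * b) w = ∑ u ∈ (B.repr a).support, ∑ v ∈ (B.repr b).support,
      B.repr a u * B.repr b v * B.repr (B u * B v) w := by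
  conv_lhs => rw [← B.linearCombination_repr a, ← B.linearCombination_repr b]
  simp only [Finsupp.linearCombination_apply, Finsupp.sum, Finset.sum_mul_sum,
    smul_mul_smul_comm, map_sum, map_smul, Finsupp.finsetSum_apply, Finsupp.smul_apply,
    smul_eq_mul]

variable [AddCommMonoid ι] [LinearOrder ι] [IsOrderedCancelAddMonoid ι]

theorem repr_mul_add_of_support_le
    (hlead : ∀ u v, B.repr (B u * B v) (u + v) = 1)
    (hlow : ∀ u v w, u + v < w → B.repr (B u * B v) w = 0)
    {a b : A} {u₀ v₀ : ι} (ha : ∀ u ∈ (B.repr a).support, u ≤ u₀)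
    (hb : ∀ v ∈ (B.repr b).support, v ≤ v₀) :
    B.repr (a * b) (u₀ + v₀) = B.repr a u₀ * B.repr b v₀ := by
  classical
  rw [repr_mul_apply]
  have hlt : ∀ u ∈ (B.repr a).support, ∀ v ∈ (B.repr b).support, (u, v) ≠ (u₀, v₀) →
      u + v < u₀ + v₀ := by
    intro u hu v hv hne
    rcases (ha u hu).lt_or_eq with h | rfl
    · exact add_lt_add_of_lt_of_le h (hb v hv)
    · exact add_lt_add_right ((hb v hv).lt_of_ne fun h => hne (by rw [h])) _
  rw [← Finset.sum_product' (f := fun u v => B.repr a u * B.repr b v * B.repr (B u * B v) _),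
    Finset.sum_eq_single (u₀, v₀)]
  · rw [hlead, mul_one]
  · rintro ⟨u, v⟩ huv hne
    rw [Finset.mem_product] at huv
    rw [hlow u v _ (hlt u huv.1 v huv.2 hne), mul_zero]
  · intro h
    rw [Finset.mem_product, Finsupp.mem_support_iff, Finsupp.mem_support_iff, not_and_or,
      not_not, not_not] at h
    rcases h with h | h <;> simp [h]

theorem noZeroDivisors_of_repr_mul [NoZeroDivisors R]
    (hlead : ∀ u v, B.repr (B u * B v) (u + v) = 1)
    (hlow : ∀ u v w, u + v < w → B.repr (B u * B v) w = 0) : NoZeroDivisors A := by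
  refine ⟨fun {a b} hab => or_iff_not_imp_left.2 fun ha => ?_⟩
  by_contra hb
  have hsa : (B.repr a).support.Nonempty := by simpa using ha
  have hsb : (B.repr b).support.Nonempty := by simpa using hb
  have key := B.repr_mul_add_of_support_le hlead hlow
    (u₀ := (B.repr a).support.max' hsa) (v₀ := (B.repr b).support.max' hsb)
    (fun u hu => (B.repr a).support.le_max' u hu) (fun v hv => (B.repr b).support.le_max' v hv)
  rw [hab, map_zero, Finsupp.zero_apply] at key
  exact mul_ne_zero (Finsupp.mem_support_iff.1 ((B.repr a).support.max'_mem hsa))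
    (Finsupp.mem_support_iff.1 ((B.repr b).support.max'_mem hsb)) key.symm

end Module.Basis

namespace Weyl

section Ring

variable {A : Type*} [Ring A] {x d : A}

theorem natCast_mul_pow_pred_mul (n : ℕ) : (n : A) * x ^ (n - 1) * x = n * x ^ n := by
  cases n <;> simp [mul_assoc, pow_succ]

theorem d_mul_x_pow (hxd : d * x - x * d = 1) (n : ℕ) :
    d * x ^ n = x ^ n * d + n * x ^ (n - 1) := by
  induction n with
  | zero => simp
  | succ n ih =>
    have hdx : d * x = x * d + 1 := by rw [← hxd]; abel
    rw [pow_succ, ← mul_assoc, ih, add_mul, mul_assoc, hdx, natCast_mul_pow_pred_mul,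
      Nat.add_sub_cancel, Nat.cast_succ]
    noncomm_ring

theorem d_pow_mul_x (hxd : d * x - x * d = 1) (n : ℕ) :
    d ^ n * x = x * d ^ n + n * d ^ (n - 1) := by
  have h := d_mul_x_pow (x := d) (d := -x) (by rw [← hxd]; noncomm_ring) n
  rw [neg_mul, mul_neg, neg_eq_iff_eq_neg] at h
  rw [h]
  abel

end Ring

section Basis

variable {k A : Type*} [CommRing k] [Ring A] [Algebra k A] {x d : A}
  {B : Module.Basis (ℕ × ℕ) k A}

theorem mem_center_of_commute (hB : ∀ ij : ℕ × ℕ, B ij = x ^ ij.1 * d ^ ij.2) {z : A}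
    (hx : Commute x z) (hd : Commute d z) : z ∈ Subring.center A := by
  have : LinearMap.mulRight k z = LinearMap.mulLeft k z :=
    B.ext fun w => by
      simp only [LinearMap.mulRight_apply, LinearMap.mulLeft_apply, hB]
      exact ((hx.pow_left w.1).mul_left (hd.pow_left w.2)).eq
  exact Subring.mem_center_iff.2 fun a => LinearMap.congr_fun this a

theorem natCast_char_eq_zero (p : ℕ) [CharP k p] : (p : A) = 0 := by
  rw [← map_natCast (algebraMap k A), CharP.cast_eq_zero, map_zero]

theorem x_pow_char_mem_center (hxd : d * x - x * d = 1)
    (hB : ∀ ij : ℕ × ℕ, B ij = x ^ ij.1 * d ^ ij.2) (p : ℕ) [CharP k p] :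
    x ^ p ∈ Subring.center A := by
  refine mem_center_of_commute hB (Commute.self_pow x p) ?_
  rw [Commute, SemiconjBy, d_mul_x_pow hxd, natCast_char_eq_zero (k := k), zero_mul, add_zero]

theorem d_pow_char_mem_center (hxd : d * x - x * d = 1)
    (hB : ∀ ij : ℕ × ℕ, B ij = x ^ ij.1 * d ^ ij.2) (p : ℕ) [CharP k p] :
    d ^ p ∈ Subring.center A := by
  refine mem_center_of_commute hB ?_ (Commute.self_pow d p)
  rw [Commute, SemiconjBy, eq_comm, d_pow_mul_x hxd, natCast_char_eq_zero (k := k), zero_mul,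
    add_zero]

theorem d_mul_basis (hxd : d * x - x * d = 1) (hB : ∀ ij : ℕ × ℕ, B ij = x ^ ij.1 * d ^ ij.2)
    (i j : ℕ) : d * B (i, j) = B (i, j + 1) + (i : k) • B (i - 1, j) := by
  simp only [hB, Algebra.smul_def, map_natCast, pow_succ']
  rw [← mul_assoc, d_mul_x_pow hxd]
  noncomm_ring

theorem basis_mul_x (hxd : d * x - x * d = 1) (hB : ∀ ij : ℕ × ℕ, B ij = x ^ ij.1 * d ^ ij.2)
    (i j : ℕ) : B (i, j) * x = B (i + 1, j) + (j : k) • B (i, j - 1) := by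
  simp only [hB, Algebra.smul_def, map_natCast, pow_succ]
  rw [mul_assoc, d_pow_mul_x hxd, mul_add, ← mul_assoc (x ^ i) (j : A), ← Nat.cast_comm]
  simp only [mul_assoc]

theorem repr_d_mul_sub_mul_d (hxd : d * x - x * d = 1)
    (hB : ∀ ij : ℕ × ℕ, B ij = x ^ ij.1 * d ^ ij.2) (z : A) (a b : ℕ) :
    B.repr (d * z - z * d) (a, b) = (a + 1 : k) * B.repr z (a + 1, b) := by
  have : Finsupp.lapply (a, b) ∘ₗ B.repr.toLinearMap ∘ₗ
      (LinearMap.mulLeft k d - LinearMap.mulRight k d) =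
      (a + 1 : k) • (Finsupp.lapply (a + 1, b) ∘ₗ B.repr.toLinearMap) := by
    refine B.ext fun ⟨i, j⟩ => ?_
    have hcomm : d * B (i, j) - B (i, j) * d = (i : k) • B (i - 1, j) := by
      rw [d_mul_basis hxd hB, hB (i, j + 1), hB (i, j), pow_succ, ← mul_assoc]
      abel
    simp only [LinearMap.comp_apply, LinearMap.sub_apply, LinearMap.smul_apply,
      LinearMap.mulLeft_apply, LinearMap.mulRight_apply, hcomm]
    rcases i with _ | i
    · simp [Prod.ext_iff]
    · by_cases h : i = a ∧ j = b <;> simp [Prod.ext_iff, h]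
  exact LinearMap.congr_fun this z

theorem repr_mul_x_sub_x_mul (hxd : d * x - x * d = 1)
    (hB : ∀ ij : ℕ × ℕ, B ij = x ^ ij.1 * d ^ ij.2) (z : A) (a b : ℕ) :
    B.repr (z * x - x * z) (a, b) = (b + 1 : k) * B.repr z (a, b + 1) := by
  have : Finsupp.lapply (a, b) ∘ₗ B.repr.toLinearMap ∘ₗ
      (LinearMap.mulRight k x - LinearMap.mulLeft k x) =
      (b + 1 : k) • (Finsupp.lapply (a, b + 1) ∘ₗ B.repr.toLinearMap) := by
    refine B.ext fun ⟨i, j⟩ => ?_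
    have hcomm : B (i, j) * x - x * B (i, j) = (j : k) • B (i, j - 1) := by
      rw [basis_mul_x hxd hB, hB (i + 1, j), hB (i, j), pow_succ', mul_assoc]
      abel
    simp only [LinearMap.comp_apply, LinearMap.sub_apply, LinearMap.smul_apply,
      LinearMap.mulLeft_apply, LinearMap.mulRight_apply, hcomm]
    rcases j with _ | j
    · simp [Prod.ext_iff]
    · by_cases h : i = a ∧ j = b <;> simp [Prod.ext_iff, h]
  exact LinearMap.congr_fun this z

theorem dvd_of_mem_support_of_mem_center (hxd : d * x - x * d = 1)
    (hB : ∀ ij : ℕ × ℕ, B ij = x ^ ij.1 * d ^ ij.2) [NoZeroDivisors k] (p : ℕ) [CharP k p]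
    {z : A} (hz : z ∈ Subring.center A) {w : ℕ × ℕ} (hw : w ∈ (B.repr z).support) :
    p ∣ w.1 ∧ p ∣ w.2 := by
  rw [Subring.mem_center_iff] at hz
  obtain ⟨i, j⟩ := w
  rw [Finsupp.mem_support_iff] at hw
  constructor
  · rcases i with _ | i
    · exact dvd_zero p
    have h := repr_d_mul_sub_mul_d hxd hB z i j
    rw [hz d, sub_self, map_zero, Finsupp.zero_apply, eq_comm] at h
    exact (CharP.cast_eq_zero_iff k p _).1 (by exact_mod_cast (mul_eq_zero.1 h).resolve_right hw)
  · rcases j with _ | j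
    · exact dvd_zero p
    have h := repr_mul_x_sub_x_mul hxd hB z i j
    rw [hz x, sub_self, map_zero, Finsupp.zero_apply, eq_comm] at h
    exact (CharP.cast_eq_zero_iff k p _).1 (by exact_mod_cast (mul_eq_zero.1 h).resolve_right hw)

variable (B) in
def xDegLT (n : ℕ) : Submodule k A := Submodule.span k (B '' {w | w.1 < n})

theorem basis_mem_xDegLT {n : ℕ} {w : ℕ × ℕ} (hw : w.1 < n) : B w ∈ xDegLT B n :=
  Submodule.subset_span ⟨w, hw, rfl⟩

theorem x_pow_mul_mem_xDegLT (hB : ∀ ij : ℕ × ℕ, B ij = x ^ ij.1 * d ^ ij.2) {n : ℕ} {a : A}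
    (ha : a ∈ xDegLT B n) (i : ℕ) : x ^ i * a ∈ xDegLT B (n + i) := by
  refine (Submodule.span_le (p := (xDegLT B (n + i)).comap (LinearMap.mulLeft k (x ^ i)))).2
    ?_ ha
  rintro _ ⟨w, hw, rfl⟩
  have : x ^ i * B w = B (w.1 + i, w.2) := by rw [hB, hB, add_comm, pow_add, mul_assoc]
  simpa [this] using basis_mem_xDegLT (B := B) (w := (w.1 + i, w.2)) (by simp at hw ⊢; omega)

theorem mul_d_pow_mem_xDegLT (hB : ∀ ij : ℕ × ℕ, B ij = x ^ ij.1 * d ^ ij.2) {n : ℕ} {a : A}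
    (ha : a ∈ xDegLT B n) (j : ℕ) : a * d ^ j ∈ xDegLT B n := by
  refine (Submodule.span_le (p := (xDegLT B n).comap (LinearMap.mulRight k (d ^ j)))).2 ?_ ha
  rintro _ ⟨w, hw, rfl⟩
  have : B w * d ^ j = B (w.1, w.2 + j) := by rw [hB, hB, pow_add, mul_assoc]
  simpa [this] using basis_mem_xDegLT (B := B) (w := (w.1, w.2 + j)) hw

theorem d_mul_mem_xDegLT (hxd : d * x - x * d = 1) (hB : ∀ ij : ℕ × ℕ, B ij = x ^ ij.1 * d ^ ij.2)
    {n : ℕ} {a : A} (ha : a ∈ xDegLT B n) : d * a ∈ xDegLT B n := by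
  refine (Submodule.span_le (p := (xDegLT B n).comap (LinearMap.mulLeft k d))).2 ?_ ha
  rintro _ ⟨⟨i, j⟩, hw, rfl⟩
  rw [SetLike.mem_coe, Submodule.mem_comap, LinearMap.mulLeft_apply, d_mul_basis hxd hB]
  exact add_mem (basis_mem_xDegLT hw)
    (Submodule.smul_mem _ _ (basis_mem_xDegLT (lt_of_le_of_lt (Nat.sub_le i 1) hw)))

theorem d_pow_mul_x_pow_sub_mem_xDegLT (hxd : d * x - x * d = 1)
    (hB : ∀ ij : ℕ × ℕ, B ij = x ^ ij.1 * d ^ ij.2) (a j : ℕ) :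
    d ^ j * x ^ a - x ^ a * d ^ j ∈ xDegLT B a := by
  induction j with
  | zero => simp
  | succ j ih =>
    have hlow : (a : A) * x ^ (a - 1) * d ^ j ∈ xDegLT B a := by
      rcases a with _ | a
      · simp
      · rw [mul_assoc, ← nsmul_eq_mul, Nat.add_sub_cancel, ← hB (a, j)]
        exact nsmul_mem (basis_mem_xDegLT (Nat.lt_succ_self a)) _
    have h : d ^ (j + 1) * x ^ a - x ^ a * d ^ (j + 1) =
        d * (d ^ j * x ^ a - x ^ a * d ^ j) + (a : A) * x ^ (a - 1) * d ^ j := by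
      have hc : (a : A) * x ^ (a - 1) = d * x ^ a - x ^ a * d := by
        rw [d_mul_x_pow hxd]; abel
      rw [pow_succ', hc]
      noncomm_ring
    rw [h]
    exact add_mem (d_mul_mem_xDegLT hxd hB ih) hlow

theorem basis_mul_basis_sub_mem_xDegLT (hxd : d * x - x * d = 1)
    (hB : ∀ ij : ℕ × ℕ, B ij = x ^ ij.1 * d ^ ij.2) (u v : ℕ × ℕ) :
    B u * B v - B (u + v) ∈ xDegLT B (u.1 + v.1) := by
  have h : B u * B v - B (u + v) =
      x ^ u.1 * ((d ^ u.2 * x ^ v.1 - x ^ v.1 * d ^ u.2) * d ^ v.2) := by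
    simp only [hB, Prod.fst_add, Prod.snd_add, pow_add]
    noncomm_ring
  rw [h, add_comm]
  exact x_pow_mul_mem_xDegLT hB
    (mul_d_pow_mem_xDegLT hB (d_pow_mul_x_pow_sub_mem_xDegLT hxd hB v.1 u.2) _) _

theorem repr_basis_mul_basis_of_le (hxd : d * x - x * d = 1)
    (hB : ∀ ij : ℕ × ℕ, B ij = x ^ ij.1 * d ^ ij.2) {u v w : ℕ × ℕ} (hw : u.1 + v.1 ≤ w.1) :
    B.repr (B u * B v) w = B.repr (B (u + v)) w := by
  have h := B.mem_span_image.1 (basis_mul_basis_sub_mem_xDegLT hxd hB u v)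
  rw [← sub_eq_zero, ← Finsupp.sub_apply, ← map_sub]
  exact Finsupp.notMem_support_iff.1 fun hmem => (h hmem).not_ge hw

theorem noZeroDivisors [NoZeroDivisors k] (hxd : d * x - x * d = 1)
    (hB : ∀ ij : ℕ × ℕ, B ij = x ^ ij.1 * d ^ ij.2) : NoZeroDivisors A := by
  refine (B.reindex toLex).noZeroDivisors_of_repr_mul (fun u v => ?_) (fun u v w huvw => ?_)
  · simp only [Module.Basis.repr_reindex_apply, Module.Basis.reindex_apply, toLex_symm_eq,
      ofLex_add]
    rw [repr_basis_mul_basis_of_le hxd hB le_rfl, B.repr_self, Finsupp.single_eq_same]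
  · simp only [Module.Basis.repr_reindex_apply, Module.Basis.reindex_apply, toLex_symm_eq]
    rw [Prod.Lex.lt_iff', ofLex_add] at huvw
    rw [repr_basis_mul_basis_of_le hxd hB huvw.1, B.repr_self,
      Finsupp.single_eq_of_ne fun h => (huvw.2 (by rw [h])).ne (by rw [h])]

theorem basis_mul_monomial (hB : ∀ ij : ℕ × ℕ, B ij = x ^ ij.1 * d ^ ij.2) {w : ℕ × ℕ} {r : ℕ}
    (hc : Commute (d ^ w.2) (x ^ r)) (s : ℕ) : B w * (x ^ r * d ^ s) = B (w + (r, s)) := by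
  rw [hB, hB, Prod.fst_add, Prod.snd_add, pow_add, pow_add, mul_assoc, ← mul_assoc (d ^ w.2),
    hc.eq]
  noncomm_ring

theorem commute_d_pow_x_pow_of_dvd (hxd : d * x - x * d = 1)
    (hB : ∀ ij : ℕ × ℕ, B ij = x ^ ij.1 * d ^ ij.2) (p : ℕ) [CharP k p] {j : ℕ} (hj : p ∣ j)
    (i : ℕ) : Commute (d ^ j) (x ^ i) := by
  obtain ⟨q, rfl⟩ := hj
  rw [pow_mul]
  have hdp : Commute (d ^ p) x := (Subring.mem_center_iff.1 (d_pow_char_mem_center hxd hB p) x).symm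
  exact (hdp.pow_left q).pow_right i

theorem repr_center_mul_monomial_eq_zero (hxd : d * x - x * d = 1)
    (hB : ∀ ij : ℕ × ℕ, B ij = x ^ ij.1 * d ^ ij.2) [NoZeroDivisors k] (p : ℕ) [CharP k p]
    {z : A} (hz : z ∈ Subring.center A) (r s : ℕ) {w : ℕ × ℕ}
    (hw : ¬(w.1 ≡ r [MOD p] ∧ w.2 ≡ s [MOD p])) : B.repr (z * (x ^ r * d ^ s)) w = 0 := by
  have hz' : z ∈ Submodule.span k (B '' {w | p ∣ w.1 ∧ p ∣ w.2}) :=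
    B.mem_span_image.2 fun w hw => dvd_of_mem_support_of_mem_center hxd hB p hz hw
  have hmem : z * (x ^ r * d ^ s) ∈
      Submodule.span k (B '' {w | w.1 ≡ r [MOD p] ∧ w.2 ≡ s [MOD p]}) := by
    refine (Submodule.span_le (p := (Submodule.span k _).comap
      (LinearMap.mulRight k (x ^ r * d ^ s)))).2 ?_ hz'
    rintro _ ⟨v, ⟨hv₁, hv₂⟩, rfl⟩
    rw [SetLike.mem_coe, Submodule.mem_comap, LinearMap.mulRight_apply,
      basis_mul_monomial hB (commute_d_pow_x_pow_of_dvd hxd hB p hv₂ r)]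
    refine Submodule.subset_span ⟨_, ⟨?_, ?_⟩, rfl⟩
    · simpa using ((Nat.modEq_zero_iff_dvd.2 hv₁).add_right r)
    · simpa using ((Nat.modEq_zero_iff_dvd.2 hv₂).add_right s)
  exact Finsupp.notMem_support_iff.1 fun h => hw (B.mem_span_image.1 hmem h)

theorem linearIndependent_monomials_over_center [IsDomain k] (hxd : d * x - x * d = 1)
    (hB : ∀ ij : ℕ × ℕ, B ij = x ^ ij.1 * d ^ ij.2) (p : ℕ) [CharP k p] :
    LinearIndependent (Subring.center A)
      (fun rs : Fin p × Fin p => x ^ (rs.1 : ℕ) * d ^ (rs.2 : ℕ)) := by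
  have := noZeroDivisors hxd hB
  rw [Fintype.linearIndependent_iff]
  rintro g hg ⟨r₀, s₀⟩
  have hclass : ∀ (rs : Fin p × Fin p) (w : ℕ × ℕ), w.1 ≡ rs.1 [MOD p] ∧ w.2 ≡ rs.2 [MOD p] →
      w.1 ≡ r₀ [MOD p] ∧ w.2 ≡ s₀ [MOD p] → rs = (r₀, s₀) := by
    rintro ⟨r, s⟩ w ⟨hr, hs⟩ ⟨hr₀, hs₀⟩
    have hr' := hr.symm.trans hr₀
    have hs' := hs.symm.trans hs₀
    rw [Nat.ModEq, Nat.mod_eq_of_lt r.2, Nat.mod_eq_of_lt r₀.2] at hr'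
    rw [Nat.ModEq, Nat.mod_eq_of_lt s.2, Nat.mod_eq_of_lt s₀.2] at hs'
    simp [Fin.ext hr', Fin.ext hs']
  have hterm : (g (r₀, s₀) : A) * (x ^ (r₀ : ℕ) * d ^ (s₀ : ℕ)) = 0 := by
    refine B.repr.injective (Finsupp.ext fun w => ?_)
    rw [map_zero, Finsupp.zero_apply]
    by_cases hw : w.1 ≡ r₀ [MOD p] ∧ w.2 ≡ s₀ [MOD p]
    · have h := congrArg (fun a => B.repr a w) hg
      simp only [map_sum, Finsupp.finsetSum_apply, map_zero, Finsupp.zero_apply,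
        Subring.smul_def, smul_eq_mul] at h
      rwa [Finset.sum_eq_single (r₀, s₀) (fun rs _ hrs => repr_center_mul_monomial_eq_zero hxd
        hB p (g rs).2 _ _ fun hrs' => hrs (hclass rs w hrs' hw)) (by simp)] at h
    · exact repr_center_mul_monomial_eq_zero hxd hB p (g (r₀, s₀)).2 _ _ hw
  have hne : x ^ (r₀ : ℕ) * d ^ (s₀ : ℕ) ≠ 0 := by
    simpa [hB] using B.ne_zero ((r₀ : ℕ), (s₀ : ℕ))
  exact Subtype.ext ((mul_eq_zero.1 hterm).resolve_right hne)

theorem span_monomials_over_center (hxd : d * x - x * d = 1)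
    (hB : ∀ ij : ℕ × ℕ, B ij = x ^ ij.1 * d ^ ij.2) {p : ℕ} (hp : 0 < p) [CharP k p] :
    ⊤ ≤ Submodule.span (Subring.center A)
      (Set.range fun rs : Fin p × Fin p => x ^ (rs.1 : ℕ) * d ^ (rs.2 : ℕ)) := by
  set S := Submodule.span (Subring.center A)
    (Set.range fun rs : Fin p × Fin p => x ^ (rs.1 : ℕ) * d ^ (rs.2 : ℕ))
  have hbasis : ∀ w, B w ∈ S := by
    intro w
    have hc : x ^ (p * (w.1 / p)) * d ^ (p * (w.2 / p)) ∈ Subring.center A := by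
      simp only [pow_mul]
      exact mul_mem (pow_mem (x_pow_char_mem_center hxd hB p) _)
        (pow_mem (d_pow_char_mem_center hxd hB p) _)
    have hw : B w = (⟨_, hc⟩ : Subring.center A) • (x ^ (w.1 % p) * d ^ (w.2 % p)) := by
      have h := basis_mul_monomial hB (w := (p * (w.1 / p), p * (w.2 / p)))
        (commute_d_pow_x_pow_of_dvd hxd hB p (dvd_mul_right _ _) (w.1 % p)) (w.2 % p)
      rw [hB, Prod.mk_add_mk, Nat.div_add_mod, Nat.div_add_mod] at h
      rw [Subring.smul_def, smul_eq_mul, h]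
    rw [hw]
    exact S.smul_mem _ (Submodule.subset_span ⟨(⟨_, Nat.mod_lt _ hp⟩, ⟨_, Nat.mod_lt _ hp⟩), rfl⟩)
  have hsmul : ∀ (c : k) {a : A}, a ∈ S → c • a ∈ S := by
    intro c a ha
    have hc : algebraMap k A c ∈ Subring.center A := Set.algebraMap_mem_center c
    rw [Algebra.smul_def]
    exact S.smul_mem (⟨_, hc⟩ : Subring.center A) ha
  rintro a -
  induction B.mem_span a using Submodule.span_induction with
  | mem _ h => obtain ⟨w, rfl⟩ := h; exact hbasis w
  | zero => exact S.zero_mem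
  | add _ _ _ _ ha hb => exact S.add_mem ha hb
  | smul c _ _ ha => exact hsmul c ha

end Basis

end Weyl

set_option synthInstance.maxHeartbeats 1000000 in
/-- Let `k` be a field whose characteristic is a prime `p`, and let `A` be the first Weyl
algebra over `k` (generators `x`, `d` with `d * x - x * d = 1` and `k`-basis the monomials
`x ^ i * d ^ j`).  Then `A` is a domain and a free module of rank `p ^ 2` over its center
`Z`; in particular the localization `K ⊗[Z] A` of `A` at the nonzero central elements is a
vector space of dimension `p ^ 2` over the fraction field `K` of `Z`. -/
theorem weyl_isDomain_and_free_rank_p_sq_over_center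
    (k : Type*) [Field k] (p : ℕ) (hp : p.Prime) [CharP k p]
    (A : Type*) [Ring A] [Algebra k A] (x d : A)
    (hxd : d * x - x * d = 1)
    (B : Module.Basis (ℕ × ℕ) k A) (hB : ∀ ij : ℕ × ℕ, B ij = x ^ ij.1 * d ^ ij.2) :
    IsDomain A ∧
    Nonempty (Module.Basis (Fin (p ^ 2)) (Subring.center A) A) ∧
    Module.finrank (FractionRing (Subring.center A))
      (TensorProduct (Subring.center A) (FractionRing (Subring.center A)) A) = p ^ 2 := by
  have : NoZeroDivisors A := Weyl.noZeroDivisors hxd hB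
  have : Nontrivial A := ⟨⟨B (0, 0), 0, B.ne_zero _⟩⟩
  let b : Module.Basis (Fin (p ^ 2)) (Subring.center A) A :=
    (Module.Basis.mk (Weyl.linearIndependent_monomials_over_center hxd hB p)
      (Weyl.span_monomials_over_center hxd hB hp.pos)).reindex
      (finProdFinEquiv.trans (finCongr (sq p).symm))
  refine ⟨NoZeroDivisors.to_isDomain A, ⟨b⟩, ?_⟩
  rw [Module.finrank_eq_card_basis (Algebra.TensorProduct.basis _ b), Fintype.card_fin]
end
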